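/- arXiv:2003.09677 — 2 statements merged into one kernel-verified Lean document; each statement's English description precedes it below -/
import Mathlib

section
/- For an exponentially distributed random variable X with rate λ > 0, E[log₂(1+X)] ≥ log₂(1 + e^{-γ}/λ), where γ is the Euler–Mascheroni constant. -/
/-!
Write `X ~ Exp(λ)` and `φ(y) = log₂(1 + e^y)`, so that `log₂(1 + X) = φ(ln X)`. The function `φ` is
convex (its derivative is the logistic function), hence Jensen's inequality gives
`E[log₂(1 + X)] ≥ φ(E[ln X])`. Finally `E[ln X] = -ln λ - γ`: after rescaling `X` to `Exp(1)` this
is `∫₀^∞ ln x e^{-x} dx = Γ'(1) = -γ`.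
-/

open MeasureTheory Real Set ProbabilityTheory
open scoped Topology

lemma convexOn_log_one_add_exp : ConvexOn ℝ univ fun x => log (1 + exp x) := by
  have hderiv (x : ℝ) : HasDerivAt (fun x => log (1 + exp x)) (exp x / (1 + exp x)) x :=
    ((hasDerivAt_exp x).const_add 1).log (by positivity)
  refine Monotone.convexOn_univ_of_deriv (fun x => (hderiv x).differentiableAt) ?_
  rw [funext fun x => (hderiv x).deriv]
  intro x y hxy
  have hexp : exp x ≤ exp y := exp_le_exp.2 hxy
  rw [div_le_div_iff₀ (by positivity) (by positivity)]
  nlinarith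

lemma convexOn_logb_one_add_exp {b : ℝ} (hb : 1 ≤ b) :
    ConvexOn ℝ univ fun x => logb b (1 + exp x) := by
  simpa only [logb, div_eq_inv_mul, smul_eq_mul] using
    convexOn_log_one_add_exp.smul (inv_nonneg.2 (log_nonneg hb))

lemma continuous_logb_one_add_exp (b : ℝ) : Continuous fun x => logb b (1 + exp x) :=
  ((continuous_const.add continuous_exp).log fun x => (by positivity : 0 < 1 + exp x).ne').div_const
    (log b)

lemma abs_log_le_two_mul_rpow_neg_half_add {x : ℝ} (hx : 0 < x) :
    |log x| ≤ 2 * x ^ (-1 / 2 : ℝ) + x := by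
  rcases le_total x 1 with hx1 | hx1
  · have h : |log x * x ^ (1 / 2 : ℝ)| < 2 := by
      convert abs_log_mul_self_rpow_lt x (1 / 2) hx hx1 one_half_pos using 1
      norm_num
    have hsplit : |log x| = |log x * x ^ (1 / 2 : ℝ)| * x ^ (-1 / 2 : ℝ) := by
      rw [abs_mul, abs_of_pos (rpow_pos_of_pos hx _), mul_assoc, ← rpow_add hx]
      norm_num
    rw [hsplit]
    nlinarith [rpow_pos_of_pos hx (-1 / 2 : ℝ)]
  · rw [abs_of_nonneg (log_nonneg hx1)]
    linarith [log_le_sub_one_of_pos hx, rpow_nonneg hx.le (-1 / 2 : ℝ)]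

lemma integrableOn_log_mul_exp_neg_mul {r : ℝ} (hr : 0 < r) :
    IntegrableOn (fun x => log x * exp (-(r * x))) (Ioi 0) := by
  have hdom : IntegrableOn (fun x : ℝ => 2 * (x ^ (-1 / 2 : ℝ) * exp (-r * x ^ (1 : ℝ))) +
      x ^ (1 : ℝ) * exp (-r * x ^ (1 : ℝ))) (Ioi 0) :=
    ((integrableOn_rpow_mul_exp_neg_mul_rpow (by norm_num) one_pos hr).const_mul 2).add
      (integrableOn_rpow_mul_exp_neg_mul_rpow (by norm_num) one_pos hr)
  refine hdom.mono' (by fun_prop) ?_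
  filter_upwards [ae_restrict_mem measurableSet_Ioi] with x hx
  rw [norm_mul, norm_of_nonneg (exp_pos _).le, rpow_one, neg_mul]
  calc |log x| * exp (-(r * x)) ≤ (2 * x ^ (-1 / 2 : ℝ) + x) * exp (-(r * x)) :=
        mul_le_mul_of_nonneg_right (abs_log_le_two_mul_rpow_neg_half_add hx) (exp_pos _).le
    _ = _ := by ring

lemma integral_log_mul_exp_neg :
    ∫ x in Ioi 0, log x * exp (-x) = -eulerMascheroniConstant := by
  have hGamma : Complex.GammaIntegral =ᶠ[𝓝 1] Complex.Gamma := by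
    filter_upwards [(isOpen_lt continuous_const Complex.continuous_re).mem_nhds
      (by norm_num : (0 : ℝ) < (1 : ℂ).re)] with s hs
    exact (Complex.Gamma_eq_integral hs).symm
  have hderiv := ((Complex.hasDerivAt_GammaIntegral (s := 1) (by norm_num)).congr_of_eventuallyEq
    hGamma.symm).unique Complex.hasDerivAt_Gamma_one
  simp only [sub_self, Complex.cpow_zero, one_mul, ← Complex.ofReal_mul] at hderiv
  rw [integral_complex_ofReal] at hderiv
  exact_mod_cast hderiv

lemma integral_log_mul_exp_neg_mul {r : ℝ} (hr : 0 < r) :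
    ∫ x in Ioi 0, log x * exp (-(r * x)) = (-log r - eulerMascheroniConstant) / r := by
  set g : ℝ → ℝ := fun u => log u * exp (-u) - log r * exp (-u)
  have hlog : IntegrableOn (fun u => log u * exp (-u)) (Ioi 0) := by
    simpa only [one_mul] using integrableOn_log_mul_exp_neg_mul one_pos
  have hexp : IntegrableOn (fun u => log r * exp (-u)) (Ioi 0) := by
    simpa only [neg_one_mul, IntegrableOn] using
      (exp_neg_integrableOn_Ioi 0 one_pos).const_mul (log r)
  calc ∫ x in Ioi 0, log x * exp (-(r * x)) = ∫ x in Ioi 0, g (r * x) := by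
        refine setIntegral_congr_fun measurableSet_Ioi fun x hx => ?_
        simp only [g, log_mul hr.ne' (ne_of_gt hx)]
        ring
    _ = r⁻¹ * (-eulerMascheroniConstant - log r) := by
        rw [integral_comp_mul_left_Ioi g 0 hr, mul_zero, smul_eq_mul, integral_sub hlog hexp,
          integral_log_mul_exp_neg, integral_const_mul, integral_exp_neg_Ioi_zero, mul_one]
    _ = (-log r - eulerMascheroniConstant) / r := by ring

lemma expMeasure_eq_withDensity (r : ℝ) :
    expMeasure r = (volume.restrict (Ioi 0)).withDensity
      fun x => ENNReal.ofReal (r * exp (-(r * x))) := by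
  have hpdf :
      exponentialPDF r = (Ici 0).indicator fun x => ENNReal.ofReal (r * exp (-(r * x))) := by
    ext x
    by_cases hx : 0 ≤ x <;> simp [exponentialPDF_eq, hx]
  change volume.withDensity (exponentialPDF r) = _
  rw [hpdf, withDensity_indicator measurableSet_Ici, Measure.restrict_congr_set Ioi_ae_eq_Ici]

section expMeasure

variable {r : ℝ}

lemma integral_expMeasure (hr : 0 ≤ r) (f : ℝ → ℝ) :
    ∫ x, f x ∂expMeasure r = ∫ x in Ioi 0, f x * (r * exp (-(r * x))) := by
  rw [expMeasure_eq_withDensity, integral_withDensity_eq_integral_toReal_smul (by fun_prop)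
    (ae_of_all _ fun _ => ENNReal.ofReal_lt_top)]
  refine setIntegral_congr_fun measurableSet_Ioi fun x _ => ?_
  rw [ENNReal.toReal_ofReal (by positivity), smul_eq_mul, mul_comm]

lemma integrable_expMeasure_iff (hr : 0 ≤ r) {f : ℝ → ℝ} :
    Integrable f (expMeasure r) ↔ IntegrableOn (fun x => f x * (r * exp (-(r * x)))) (Ioi 0) := by
  rw [expMeasure_eq_withDensity, integrable_withDensity_iff_integrable_smul' (by fun_prop)
    (ae_of_all _ fun _ => ENNReal.ofReal_lt_top), IntegrableOn]
  refine integrable_congr (ae_of_all _ fun x => ?_)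
  simp only [ENNReal.toReal_ofReal (by positivity : 0 ≤ r * exp (-(r * x))), smul_eq_mul, mul_comm]

lemma ae_pos_expMeasure : ∀ᵐ x ∂expMeasure r, 0 < x := by
  rw [expMeasure_eq_withDensity]
  exact (withDensity_absolutelyContinuous _ _).ae_le (ae_restrict_mem measurableSet_Ioi)

lemma integrable_id_expMeasure (hr : 0 < r) : Integrable id (expMeasure r) := by
  rw [integrable_expMeasure_iff hr.le]
  refine IntegrableOn.congr_fun
    ((integrableOn_rpow_mul_exp_neg_mul_rpow (s := 1) (by norm_num) one_pos hr).const_mul r)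
    (fun x _ => ?_) measurableSet_Ioi
  simp only [rpow_one, id, neg_mul]
  ring

lemma integrable_log_expMeasure (hr : 0 < r) : Integrable log (expMeasure r) := by
  rw [integrable_expMeasure_iff hr.le]
  refine IntegrableOn.congr_fun ((integrableOn_log_mul_exp_neg_mul hr).const_mul r)
    (fun x _ => ?_) measurableSet_Ioi
  ring

lemma integral_log_expMeasure (hr : 0 < r) :
    ∫ x, log x ∂expMeasure r = -log r - eulerMascheroniConstant := by
  simp_rw [integral_expMeasure hr.le, mul_left_comm _ r, integral_const_mul,
    integral_log_mul_exp_neg_mul hr]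
  field_simp

lemma integrable_logb_one_add_exp_log_expMeasure {b : ℝ} (hb : 1 ≤ b) (hr : 0 < r) :
    Integrable (fun x => logb b (1 + exp (log x))) (expMeasure r) := by
  refine ((integrable_id_expMeasure hr).div_const (log b)).mono'
    ((continuous_logb_one_add_exp b).measurable.comp measurable_log).aestronglyMeasurable ?_
  filter_upwards [ae_pos_expMeasure] with x hx
  have hlog_nonneg : 0 ≤ log (1 + x) := log_nonneg (by linarith)
  have hlog_le : log (1 + x) ≤ x := by linarith [log_le_sub_one_of_pos (by linarith : 0 < 1 + x)]
  rw [exp_log hx, logb, norm_of_nonneg (div_nonneg hlog_nonneg (log_nonneg hb))]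
  exact div_le_div_of_nonneg_right hlog_le (log_nonneg hb)

end expMeasure

/-- For `X ~ Exp(l)` with rate `l > 0`, `E[log₂(1+X)] ≥ log₂(1 + e^{-γ}/l)`, where `γ`
is the Euler–Mascheroni constant.  The expectation is written as the integral against the
exponential density on `(0, ∞)`. -/
theorem exp_logb_lower_bound (l : ℝ) (hl : 0 < l) :
    Real.logb 2 (1 + Real.exp (-Real.eulerMascheroniConstant) / l)
      ≤ ∫ x in Set.Ioi (0 : ℝ), Real.logb 2 (1 + x) * (l * Real.exp (-l * x)) := by
  have := isProbabilityMeasure_expMeasure hl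
  have jensen := (convexOn_logb_one_add_exp one_le_two).map_integral_le
    (continuous_logb_one_add_exp 2).continuousOn isClosed_univ (ae_of_all _ fun _ => mem_univ _)
    (integrable_log_expMeasure hl) (integrable_logb_one_add_exp_log_expMeasure one_le_two hl)
  rw [integral_log_expMeasure hl, integral_expMeasure hl.le] at jensen
  convert jensen using 1
  · rw [sub_eq_add_neg, exp_add, exp_neg (log l), exp_log hl, div_eq_inv_mul]
  · refine setIntegral_congr_fun measurableSet_Ioi fun x hx => ?_
    rw [exp_log hx, neg_mul]
end

section
/- Let x_U, y_U, x̂_E, ŷ_E, Q, α_E be reals with Q > 0. Then the following are equivalent: (i) for all (Δx, Δy) ∈ ℝ² with Δx² + Δy² ≤ Q², (x̂_E + Δx − x_U)² + (ŷ_E + Δy − y_U)² ≤ α_E; (ii) there exist reals θ and μ ≥ 0 such that (x_U − x̂_E)² + (y_U − ŷ_E)² − α_E ≤ θ and the 3×3 symmetric matrix S = [[μ−1, 0, x_U − x̂_E], [0, μ−1, y_U − ŷ_E], [x_U − x̂_E, y_U − ŷ_E, −Q²μ − θ]] is positive semidefinite. -/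
/-!
Write `d = (a, b) = (xU - xE, yU - yE)` and `r = ‖d‖`. The point of the disk of radius `Q` farthest
from `d` lies at distance `r + Q`, so (i) says exactly `(r + Q)² ≤ αE`. Evaluating the quadratic
form of the matrix at `(Δx, Δy, 1)` and adding `μ (Q² - Δx² - Δy²) ≥ 0` gives (ii) ⇒ (i).
Conversely `μ = 1 + r / Q`, `θ = -Q² - 2 Q r` is a certificate: the matrix becomes
`[[r/Q, 0, a], [0, r/Q, b], [a, b, Q r]]`, whose Schur complement vanishes.
-/

open Matrix

theorem exists_norm_le_norm_sub_eq_norm_add {E : Type*} [NormedAddCommGroup E]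
    [NormedSpace ℝ E] [Nontrivial E] (d : E) {Q : ℝ} (hQ : 0 ≤ Q) :
    ∃ v : E, ‖v‖ ≤ Q ∧ ‖v - d‖ = ‖d‖ + Q := by
  rcases eq_or_ne d 0 with rfl | hd
  · obtain ⟨v, hv⟩ := exists_norm_eq E hQ
    exact ⟨v, hv.le, by simp [hv]⟩
  · have hd' : 0 < ‖d‖ := norm_pos_iff.2 hd
    refine ⟨-((Q / ‖d‖) • d), ?_, ?_⟩
    · rw [norm_neg, norm_smul, Real.norm_of_nonneg (by positivity), div_mul_cancel₀ _ hd'.ne']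
    · rw [show -((Q / ‖d‖) • d) - d = -((Q / ‖d‖ + 1) • d) by module, norm_neg, norm_smul,
        Real.norm_of_nonneg (by positivity), add_mul, div_mul_cancel₀ _ hd'.ne', one_mul,
        add_comm]

theorem add_sq_le_of_forall_sq_dist_le {a b Q α : ℝ} (hQ : 0 ≤ Q)
    (h : ∀ Δx Δy : ℝ, Δx ^ 2 + Δy ^ 2 ≤ Q ^ 2 → (Δx - a) ^ 2 + (Δy - b) ^ 2 ≤ α) :
    (√(a ^ 2 + b ^ 2) + Q) ^ 2 ≤ α := by
  have norm_sq (v : EuclideanSpace ℝ (Fin 2)) : ‖v‖ ^ 2 = v 0 ^ 2 + v 1 ^ 2 := by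
    simp [EuclideanSpace.real_norm_sq_eq, Fin.sum_univ_two]
  obtain ⟨v, hv, hvd⟩ := exists_norm_le_norm_sub_eq_norm_add !₂[a, b] hQ
  have hnorm : ‖!₂[a, b]‖ = √(a ^ 2 + b ^ 2) := by
    rw [← Real.sqrt_sq (norm_nonneg (!₂[a, b])), norm_sq]
    simp
  have hfar := h (v 0) (v 1) (by rw [← norm_sq]; gcongr)
  rwa [← hnorm, ← hvd, norm_sq]

theorem star_dotProduct_mulVec_bordered (p a b c : ℝ) (x : Fin 3 → ℝ) :
    star x ⬝ᵥ !![p, 0, a; 0, p, b; a, b, c] *ᵥ x =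
      p * (x 0 ^ 2 + x 1 ^ 2) + 2 * x 2 * (a * x 0 + b * x 1) + c * x 2 ^ 2 := by
  simp only [dotProduct, Pi.star_apply, star_trivial, mulVec, of_apply, cons_val',
    cons_val_fin_one, Fin.sum_univ_three, Fin.isValue, cons_val_zero, cons_val_one, cons_val,
    zero_mul, add_zero, zero_add]
  ring

theorem posSemidef_bordered_of_sq_add_sq_le {p a b c : ℝ} (hp : 0 ≤ p) (hc : 0 ≤ c)
    (h : a ^ 2 + b ^ 2 ≤ p * c) :
    (!![p, 0, a; 0, p, b; a, b, c] : Matrix (Fin 3) (Fin 3) ℝ).PosSemidef := by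
  refine .of_dotProduct_mulVec_nonneg ?_ fun x ↦ ?_
  · ext i j
    fin_cases i <;> fin_cases j <;> simp
  rw [star_dotProduct_mulVec_bordered]
  rcases hp.eq_or_lt with rfl | hp
  · have ha : a = 0 := by nlinarith
    have hb : b = 0 := by nlinarith
    subst ha hb
    simp only [zero_mul, mul_zero, add_zero, zero_add]
    positivity
  · refine nonneg_of_mul_nonneg_right ?_ hp
    have hsos : p * (p * (x 0 ^ 2 + x 1 ^ 2) + 2 * x 2 * (a * x 0 + b * x 1) + c * x 2 ^ 2) =
        (p * x 0 + a * x 2) ^ 2 + (p * x 1 + b * x 2) ^ 2 +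
          (p * c - (a ^ 2 + b ^ 2)) * x 2 ^ 2 := by
      ring
    rw [hsos]
    have hgap : 0 ≤ p * c - (a ^ 2 + b ^ 2) := sub_nonneg.2 h
    positivity

theorem sq_dist_le_of_posSemidef {a b Q α θ μ : ℝ} (hμ : 0 ≤ μ) (hθ : a ^ 2 + b ^ 2 - α ≤ θ)
    (hM : (!![μ - 1, 0, a; 0, μ - 1, b; a, b, -Q ^ 2 * μ - θ] :
      Matrix (Fin 3) (Fin 3) ℝ).PosSemidef)
    {Δx Δy : ℝ} (hΔ : Δx ^ 2 + Δy ^ 2 ≤ Q ^ 2) :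
    (Δx - a) ^ 2 + (Δy - b) ^ 2 ≤ α := by
  have hform := hM.dotProduct_mulVec_nonneg ![Δx, Δy, 1]
  rw [star_dotProduct_mulVec_bordered] at hform
  simp only [Fin.isValue, cons_val_zero, cons_val_one, cons_val, mul_one, neg_mul, one_pow]
    at hform
  nlinarith [mul_nonneg hμ (sub_nonneg.2 hΔ)]

/-- S-procedure / Schur-complement reformulation of the robust distance constraint.
The worst-case constraint (i) over the disk of radius `Q` around the estimated
eavesdropper location is equivalent to (ii) the existence of `θ` and `μ ≥ 0` making the
associated `3 × 3` matrix positive semidefinite. -/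
theorem s_procedure_robust_distance (xU yU xE yE Q αE : ℝ) (hQ : 0 < Q) :
    (∀ Δx Δy : ℝ, Δx ^ 2 + Δy ^ 2 ≤ Q ^ 2 →
        (xE + Δx - xU) ^ 2 + (yE + Δy - yU) ^ 2 ≤ αE) ↔
      (∃ θ μ : ℝ, 0 ≤ μ ∧ (xU - xE) ^ 2 + (yU - yE) ^ 2 - αE ≤ θ ∧
        (!![μ - 1, 0, xU - xE;
            0, μ - 1, yU - yE;
            xU - xE, yU - yE, -Q ^ 2 * μ - θ] : Matrix (Fin 3) (Fin 3) ℝ).PosSemidef) := by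
  have hshift (Δx Δy : ℝ) : (xE + Δx - xU) ^ 2 + (yE + Δy - yU) ^ 2 =
      (Δx - (xU - xE)) ^ 2 + (Δy - (yU - yE)) ^ 2 := by ring
  simp only [hshift]
  set a := xU - xE
  set b := yU - yE
  constructor
  · intro h
    set r := √(a ^ 2 + b ^ 2)
    have hr : 0 ≤ r := Real.sqrt_nonneg _
    have hr2 : r ^ 2 = a ^ 2 + b ^ 2 := Real.sq_sqrt (by positivity)
    have hfar : (r + Q) ^ 2 ≤ αE := add_sq_le_of_forall_sq_dist_le hQ.le h
    refine ⟨-Q ^ 2 - 2 * Q * r, 1 + r / Q, by positivity, by nlinarith, ?_⟩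
    have hp : 1 + r / Q - 1 = r / Q := by ring
    have hc : -Q ^ 2 * (1 + r / Q) - (-Q ^ 2 - 2 * Q * r) = Q * r := by field_simp; ring
    rw [hp, hc]
    refine posSemidef_bordered_of_sq_add_sq_le (by positivity) (by positivity) (le_of_eq ?_)
    rw [← hr2]
    field_simp
  · rintro ⟨θ, μ, hμ, hθ, hM⟩ Δx Δy hΔ
    exact sq_dist_le_of_posSemidef hμ hθ hM hΔ
end
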